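/- Katakernel Lemma, part 3: Let A be an additive abelian group and let Γ, Δ be two prerings of endogenies of A such that every γ ∈ Γ commutes sharply with every δ ∈ Δ. Then for any γ ∈ Γ, the subgroup γ⁻¹[Kat(Γ, Δ)] := {a ∈ A : γ[a] ⊆ Kat(Γ, Δ)} contains Kat(Γ, Δ) and is fully Δ-invariant: δ[γ⁻¹[Kat(Γ, Δ)]] ⊆ γ⁻¹[Kat(Γ, Δ)] for every δ ∈ Δ. -/

import Mathlib

open Pointwise

variable {A : Type*} [AddCommGroup A]

/-- The fibre `γ[a]` of a relation `γ ⊆ A × A` over `a`. -/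
def fib (γ : Set (A × A)) (a : A) : Set A := {b | (a, b) ∈ γ}

/-- The image `γ[S]` of a set `S ⊆ A` under a relation `γ ⊆ A × A`. -/
def eimg (γ : Set (A × A)) (S : Set A) : Set A := {b | ∃ a ∈ S, (a, b) ∈ γ}

/-- The katakernel `kat γ = γ[0]`. -/
def kat (γ : Set (A × A)) : Set A := {b | ((0 : A), b) ∈ γ}

/-- The image `im γ = γ[A]`. -/
def eim (γ : Set (A × A)) : Set A := {b | ∃ a, (a, b) ∈ γ}

/-- `γ` is (the carrier of) an additive subgroup of `A × A`. -/
def IsAddSubgroupSet (γ : Set (A × A)) : Prop :=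
  (0 : A × A) ∈ γ ∧ (∀ p ∈ γ, ∀ q ∈ γ, p + q ∈ γ) ∧ (∀ p ∈ γ, -p ∈ γ)

/-- An endogeny of `A`: an additive subgroup of `A × A` projecting onto `A`
with finite katakernel. -/
def IsEndogeny (γ : Set (A × A)) : Prop :=
  IsAddSubgroupSet γ ∧ (∀ a : A, ∃ b : A, (a, b) ∈ γ) ∧ (kat γ).Finite

/-- Pointwise sum of endogenies. -/
def esum (γ₁ γ₂ : Set (A × A)) : Set (A × A) :=
  {p | ∃ b₁ b₂ : A, (p.1, b₁) ∈ γ₁ ∧ (p.1, b₂) ∈ γ₂ ∧ p.2 = b₁ + b₂}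

/-- Pointwise negation of an endogeny. -/
def eneg (γ : Set (A × A)) : Set (A × A) := {p | (p.1, -p.2) ∈ γ}

/-- Pointwise difference of endogenies. -/
def esub (γ₁ γ₂ : Set (A × A)) : Set (A × A) := esum γ₁ (eneg γ₂)

/-- Composition of endogenies (as relations): `(a, c) ∈ γ₁ ∘ γ₂` iff
`∃ b, b ∈ γ₂[a]` and `c ∈ γ₁[b]`. -/
def ecomp (γ₁ γ₂ : Set (A × A)) : Set (A × A) :=
  {p | ∃ b : A, (p.1, b) ∈ γ₂ ∧ (b, p.2) ∈ γ₁}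

/-- Sharp commutation: `im (γ ∘ δ − δ ∘ γ) ⊆ kat γ + kat δ`. -/
def SharpCommute (γ δ : Set (A × A)) : Prop :=
  eim (esub (ecomp γ δ) (ecomp δ γ)) ⊆ kat γ + kat δ

/-- Equivalence of endogenies: they agree modulo a finite subgroup. -/
def EEquiv (γ₁ γ₂ : Set (A × A)) : Prop :=
  ∃ F : AddSubgroup A, (F : Set A).Finite ∧
    ∀ a : A, fib γ₁ a + (F : Set A) = fib γ₂ a + (F : Set A)

/-- A prering of endogenies: a set of endogenies closed under `+`, `−` and `∘`. -/
def IsPrering (Γ : Set (Set (A × A))) : Prop :=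
  (∀ γ ∈ Γ, IsEndogeny γ) ∧ (∀ γ ∈ Γ, ∀ δ ∈ Γ, esum γ δ ∈ Γ) ∧
  (∀ γ ∈ Γ, eneg γ ∈ Γ) ∧ (∀ γ ∈ Γ, ∀ δ ∈ Γ, ecomp γ δ ∈ Γ)

/-- The katakernel of a prering: the subgroup generated by all the katakernels. -/
def Kat (Γ : Set (Set (A × A))) : AddSubgroup A :=
  AddSubgroup.closure (⋃ γ ∈ Γ, kat γ)

/-! Sharp commutation says that `γ[δ[a]]` and `δ[γ[a]]` differ by elements of
`kat γ + kat δ ⊆ K := Kat(Γ, Δ)`. Applied at `a ∈ kat β` it shows that every member of `Γ`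
and of `Δ` maps each generating katakernel, hence all of `K`, into `K`; in particular
`K ⊆ γ⁻¹[K]`. If now `γ[a] ⊆ K` and `c ∈ δ[a]`, then `γ[c]` lies in `δ[γ[a]] + K ⊆ δ[K] + K ⊆ K`. -/

section Relation

variable {γ δ : Set (A × A)}

theorem IsAddSubgroupSet.sub_mem_kat (hγ : IsAddSubgroupSet γ) {a b b' : A}
    (hb : (a, b) ∈ γ) (hb' : (a, b') ∈ γ) : b - b' ∈ kat γ := by
  simpa [kat, Prod.ext_iff, sub_eq_add_neg] using hγ.2.1 _ hb _ (hγ.2.2 _ hb')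

theorem IsAddSubgroupSet.zero_mem_ecomp (hγ : IsAddSubgroupSet γ) (hδ : IsAddSubgroupSet δ) :
    ((0 : A), (0 : A)) ∈ ecomp γ δ :=
  ⟨0, hδ.1, hγ.1⟩

theorem mem_kat_ecomp {c b : A} (hc : c ∈ kat δ) (hb : (c, b) ∈ γ) : b ∈ kat (ecomp γ δ) :=
  ⟨c, hc, hb⟩

def relPreimage (hγ : IsAddSubgroupSet γ) (htot : ∀ a, ∃ b, (a, b) ∈ γ) (K : AddSubgroup A)
    (hkat : kat γ ⊆ K) : AddSubgroup A where
  carrier := {a | fib γ a ⊆ K}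
  zero_mem' := hkat
  add_mem' := by
    intro a a' ha ha' b hb
    obtain ⟨b₁, hb₁⟩ := htot a
    obtain ⟨b₂, hb₂⟩ := htot a'
    have hsum : (a + a', b₁ + b₂) ∈ γ := hγ.2.1 _ hb₁ _ hb₂
    simpa using add_mem (hkat (hγ.sub_mem_kat hb hsum)) (add_mem (ha hb₁) (ha' hb₂))
  neg_mem' := by
    intro a ha b hb
    obtain ⟨b₁, hb₁⟩ := htot a
    have hneg : (-a, -b₁) ∈ γ := hγ.2.2 _ hb₁
    simpa using add_mem (hkat (hγ.sub_mem_kat hb hneg)) (neg_mem (ha hb₁))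

theorem fib_subset_of_mem_closure (hγ : IsAddSubgroupSet γ) (htot : ∀ a, ∃ b, (a, b) ∈ γ)
    {K : AddSubgroup A} (hkat : kat γ ⊆ K) {S : Set A} (hS : ∀ c ∈ S, fib γ c ⊆ K)
    {a : A} (ha : a ∈ AddSubgroup.closure S) : fib γ a ⊆ K :=
  (AddSubgroup.closure_le (K := relPreimage hγ htot K hkat)).2 hS ha

theorem SharpCommute.sub_mem (h : SharpCommute γ δ) {a c f : A}
    (hc : (a, c) ∈ ecomp γ δ) (hf : (a, f) ∈ ecomp δ γ) : c - f ∈ kat γ + kat δ :=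
  h ⟨a, c, -f, hc, by simpa [eneg] using hf, sub_eq_add_neg c f⟩

theorem SharpCommute.mem_of_mem_kat_ecomp (h : SharpCommute γ δ) (hγ : IsAddSubgroupSet γ)
    (hδ : IsAddSubgroupSet δ) {b : A} (hb : b ∈ kat (ecomp γ δ)) : b ∈ kat γ + kat δ := by
  simpa using h.sub_mem hb (hδ.zero_mem_ecomp hγ)

theorem SharpCommute.neg_mem_of_mem_kat_ecomp (h : SharpCommute γ δ) (hγ : IsAddSubgroupSet γ)
    (hδ : IsAddSubgroupSet δ) {b : A} (hb : b ∈ kat (ecomp δ γ)) : -b ∈ kat γ + kat δ := by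
  simpa using h.sub_mem (hγ.zero_mem_ecomp hδ) hb

end Relation

section Kat

variable {Γ Δ : Set (Set (A × A))}

theorem kat_subset_Kat {γ : Set (A × A)} (hγ : γ ∈ Γ) : kat γ ⊆ Kat Γ :=
  fun _ hb => AddSubgroup.subset_closure (Set.mem_biUnion hγ hb)

theorem kat_add_kat_subset_Kat_sup {γ δ : Set (A × A)} (hγ : γ ∈ Γ) (hδ : δ ∈ Δ) :
    kat γ + kat δ ⊆ (Kat Γ ⊔ Kat Δ : AddSubgroup A) :=
  Set.add_subset_iff.2 fun _ hb _ hc =>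
    add_mem (AddSubgroup.mem_sup_left (kat_subset_Kat hγ hb))
      (AddSubgroup.mem_sup_right (kat_subset_Kat hδ hc))

theorem Kat_sup_eq_closure :
    Kat Γ ⊔ Kat Δ = AddSubgroup.closure ((⋃ γ ∈ Γ, kat γ) ∪ ⋃ δ ∈ Δ, kat δ) :=
  (AddSubgroup.closure_union _ _).symm

theorem fib_subset_of_mem_Kat_sup {ε : Set (A × A)} (hε : IsEndogeny ε) {K : AddSubgroup A}
    (hkat : kat ε ⊆ K) (hΓ : ∀ γ ∈ Γ, ∀ c ∈ kat γ, fib ε c ⊆ K)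
    (hΔ : ∀ δ ∈ Δ, ∀ c ∈ kat δ, fib ε c ⊆ K) {a : A} (ha : a ∈ Kat Γ ⊔ Kat Δ) :
    fib ε a ⊆ K := by
  rw [Kat_sup_eq_closure] at ha
  refine fib_subset_of_mem_closure hε.1 hε.2.1 hkat ?_ ha
  simp only [Set.mem_union, Set.mem_iUnion]
  rintro c (⟨γ, hγ, hc⟩ | ⟨δ, hδ, hc⟩)
  exacts [hΓ γ hγ c hc, hΔ δ hδ c hc]

variable (hΓ : IsPrering Γ) (hΔ : IsPrering Δ) (hc : ∀ γ ∈ Γ, ∀ δ ∈ Δ, SharpCommute γ δ)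
include hΓ hΔ hc

theorem fib_subset_Kat_sup_of_mem_left {γ : Set (A × A)} (hγ : γ ∈ Γ) {a : A}
    (ha : a ∈ Kat Γ ⊔ Kat Δ) : fib γ a ⊆ (Kat Γ ⊔ Kat Δ : AddSubgroup A) := by
  refine fib_subset_of_mem_Kat_sup (hΓ.1 γ hγ)
    (fun b hb => AddSubgroup.mem_sup_left (kat_subset_Kat hγ hb)) ?_ ?_ ha
  · intro β hβ c hc' b hb
    exact AddSubgroup.mem_sup_left
      (kat_subset_Kat (hΓ.2.2.2 γ hγ β hβ) (mem_kat_ecomp hc' hb))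
  · intro δ hδ c hc' b hb
    exact kat_add_kat_subset_Kat_sup hγ hδ <| (hc γ hγ δ hδ).mem_of_mem_kat_ecomp
      (hΓ.1 γ hγ).1 (hΔ.1 δ hδ).1 (mem_kat_ecomp hc' hb)

theorem fib_subset_Kat_sup_of_mem_right {δ : Set (A × A)} (hδ : δ ∈ Δ) {a : A}
    (ha : a ∈ Kat Γ ⊔ Kat Δ) : fib δ a ⊆ (Kat Γ ⊔ Kat Δ : AddSubgroup A) := by
  refine fib_subset_of_mem_Kat_sup (hΔ.1 δ hδ)
    (fun b hb => AddSubgroup.mem_sup_right (kat_subset_Kat hδ hb)) ?_ ?_ ha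
  · intro β hβ c hc' b hb
    have hneg := kat_add_kat_subset_Kat_sup hβ hδ <| (hc β hβ δ hδ).neg_mem_of_mem_kat_ecomp
      (hΓ.1 β hβ).1 (hΔ.1 δ hδ).1 (mem_kat_ecomp hc' hb)
    simpa using neg_mem hneg
  · intro β hβ c hc' b hb
    exact AddSubgroup.mem_sup_right
      (kat_subset_Kat (hΔ.2.2.2 δ hδ β hβ) (mem_kat_ecomp hc' hb))

end Kat

/-- Katakernel Lemma, part 3: for `γ ∈ Γ`, the subgroup
`γ⁻¹[Kat(Γ, Δ)]` contains `Kat(Γ, Δ)` and is fully `Δ`-invariant. -/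
theorem preimage_bikat_fully_invariant (Γ Δ : Set (Set (A × A)))
    (hΓ : IsPrering Γ) (hΔ : IsPrering Δ)
    (hc : ∀ γ ∈ Γ, ∀ δ ∈ Δ, SharpCommute γ δ) (γ : Set (A × A)) (hγ : γ ∈ Γ) :
    ((Kat Γ ⊔ Kat Δ : AddSubgroup A) : Set A) ⊆
      {a : A | fib γ a ⊆ ((Kat Γ ⊔ Kat Δ : AddSubgroup A) : Set A)} ∧
    ∀ δ ∈ Δ, eimg δ {a : A | fib γ a ⊆ ((Kat Γ ⊔ Kat Δ : AddSubgroup A) : Set A)} ⊆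
      {a : A | fib γ a ⊆ ((Kat Γ ⊔ Kat Δ : AddSubgroup A) : Set A)} := by
  refine ⟨fun a ha => fib_subset_Kat_sup_of_mem_left hΓ hΔ hc hγ ha, ?_⟩
  rintro δ hδ c ⟨a, ha, hac⟩ d hd
  obtain ⟨e, hae⟩ := (hΓ.1 γ hγ).2.1 a
  obtain ⟨f, hef⟩ := (hΔ.1 δ hδ).2.1 e
  have hdf : d - f ∈ Kat Γ ⊔ Kat Δ :=
    kat_add_kat_subset_Kat_sup hγ hδ ((hc γ hγ δ hδ).sub_mem ⟨c, hac, hd⟩ ⟨e, hae, hef⟩)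
  have hf : f ∈ Kat Γ ⊔ Kat Δ := fib_subset_Kat_sup_of_mem_right hΓ hΔ hc hδ (ha hae) hef
  simpa using add_mem hdf hf
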